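/- Let n ≥ 1 and let f : ([0,1])^n → ℝ be a continuous function that is invariant under every permutation of its n arguments. Then there exist a continuous function ρ : ℝ^{n+1} → ℝ and the continuous map ϕ : [0,1] → ℝ^{n+1} given by ϕ(t) = (1, t, t², …, tⁿ) such that for all x ∈ [0,1]^n, f(x₁, …, xₙ) = ρ(ϕ(x₁) + ⋯ + ϕ(xₙ)). -/

import Mathlib

/-!
By Newton's identities the power sums `∑ᵢ xᵢᵏ`, `k ≤ n`, determine the elementary symmetric
functions of `x`, hence the polynomial `∏ᵢ (X - xᵢ)` and its multiset of roots; so two points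
with the same `Φ x = ∑ᵢ ϕ (xᵢ)` differ by a permutation and a symmetric `f` is constant on the
fibres of `Φ`. On the compact cube `Φ` is a quotient map onto its closed image, so `f` descends
to a continuous function on that image, and Tietze's theorem extends it to all of `ℝⁿ⁺¹`.
-/

universe u

open Finset MvPolynomial

theorem MvPolynomial.aeval_esymm_eq_of_aeval_psum_eq {σ R : Type*} [Fintype σ] [CommRing R]
    [IsDomain R] [CharZero R] {m : ℕ} {x y : σ → R}
    (h : ∀ k ≤ m, aeval x (psum σ R k) = aeval y (psum σ R k)) {k : ℕ} (hk : k ≤ m) :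
    aeval x (esymm σ R k) = aeval y (esymm σ R k) := by
  induction k using Nat.strong_induction_on with
  | _ k ih =>
  rcases eq_or_ne k 0 with rfl | hk0
  · simp [esymm_zero]
  have newton (z : σ → R) := congrArg (aeval z) (mul_esymm_eq_sum σ R k)
  simp only [map_mul, map_natCast, map_sum, map_pow, map_neg, map_one] at newton
  refine mul_left_cancel₀ (Nat.cast_ne_zero.2 hk0 : (k : R) ≠ 0) ?_
  rw [newton x, newton y]
  congr 1
  refine sum_congr rfl fun a ha => ?_
  rw [mem_filter, HasAntidiagonal.mem_antidiagonal] at ha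
  rw [ih a.1 ha.2 (by omega), h a.2 (by omega)]

theorem Multiset.eq_of_esymm_eq {R : Type*} [CommRing R] [IsDomain R] {s t : Multiset R}
    (hcard : card s = card t) (h : ∀ k ≤ card s, s.esymm k = t.esymm k) : s = t := by
  have hprod : (s.map fun a => Polynomial.X - Polynomial.C a).prod =
      (t.map fun a => Polynomial.X - Polynomial.C a).prod := by
    rw [Multiset.prod_X_sub_X_eq_sum_esymm, Multiset.prod_X_sub_X_eq_sum_esymm, ← hcard]
    exact sum_congr rfl fun k hk => by rw [h k (Nat.lt_succ_iff.1 (mem_range.1 hk))]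
  simpa only [Polynomial.roots_multiset_prod_X_sub_C] using congrArg Polynomial.roots hprod

theorem Equiv.Perm.exists_comp_eq_of_map_univ_eq {ι α : Type*} [Fintype ι] {x y : ι → α}
    (h : univ.val.map x = univ.val.map y) : ∃ σ : Equiv.Perm ι, x ∘ σ = y := by
  classical
  have hcard (a : α) : Fintype.card {i // y i = a} = Fintype.card {i // x i = a} := by
    convert congrArg (Multiset.count a) h.symm using 1 <;>
      simp [Fintype.card_subtype, Multiset.count_map, eq_comm, Finset.card_def]
  exact ⟨Equiv.ofFiberEquiv fun a => Fintype.equivOfCardEq (hcard a),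
    funext (Equiv.ofFiberEquiv_map _)⟩

theorem Equiv.Perm.exists_comp_eq_of_sum_pow_eq {ι R : Type*} [Fintype ι] [CommRing R]
    [IsDomain R] [CharZero R] {x y : ι → R}
    (h : ∀ k ≤ Fintype.card ι, ∑ i, x i ^ k = ∑ i, y i ^ k) : ∃ σ : Equiv.Perm ι, x ∘ σ = y := by
  refine exists_comp_eq_of_map_univ_eq (Multiset.eq_of_esymm_eq (by simp) fun k hk => ?_)
  rw [← aeval_esymm_eq_multiset_esymm ι R, ← aeval_esymm_eq_multiset_esymm ι R]
  exact aeval_esymm_eq_of_aeval_psum_eq (by simpa [psum] using h) (by simpa using hk)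

theorem ContinuousMap.exists_comp_eq_of_factorsThrough {X : Type*} {Y : Type u} {Z : Type*}
    [TopologicalSpace X] [CompactSpace X] [TopologicalSpace Y] [T4Space Y]
    [TopologicalSpace Z] [TietzeExtension.{u} Z] (Φ : C(X, Y)) (f : C(X, Z))
    (h : Function.FactorsThrough f Φ) : ∃ ρ : C(Y, Z), ρ.comp Φ = f := by
  let q : C(X, Set.range Φ) := ⟨Set.rangeFactorization Φ, Φ.continuous.rangeFactorization⟩
  have hq : Topology.IsQuotientMap q :=
    .of_surjective_continuous Set.rangeFactorization_surjective q.continuous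
  have hfq : Function.FactorsThrough f q := fun a b hab => h congr($hab.1)
  obtain ⟨ρ, hρ⟩ := (hq.lift f hfq).exists_restrict_eq (isCompact_range Φ.continuous).isClosed
  refine ⟨ρ, ?_⟩
  rw [← hq.lift_comp f hfq, ← hρ]
  rfl

theorem IsCompact.exists_continuousMap_eqOn_comp {X : Type*} {Y : Type u} {Z : Type*}
    [TopologicalSpace X] [TopologicalSpace Y] [T4Space Y]
    [TopologicalSpace Z] [TietzeExtension.{u} Z] {K : Set X} (hK : IsCompact K) {Φ : X → Y}
    {f : X → Z} (hΦ : ContinuousOn Φ K) (hf : ContinuousOn f K)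
    (hfib : ∀ x ∈ K, ∀ y ∈ K, Φ x = Φ y → f x = f y) :
    ∃ ρ : C(Y, Z), Set.EqOn f (ρ ∘ Φ) K := by
  have := isCompact_iff_compactSpace.1 hK
  obtain ⟨ρ, hρ⟩ := ContinuousMap.exists_comp_eq_of_factorsThrough ⟨K.domRestrict Φ, hΦ.domRestrict⟩
    ⟨K.domRestrict f, hf.domRestrict⟩ fun a b hab => hfib a a.2 b b.2 hab
  exact ⟨ρ, fun x hx => congr($hρ ⟨x, hx⟩).symm⟩

theorem deepsets_decomposition_scalar_general
    (n : ℕ)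
    (f : (Fin n → ℝ) → ℝ)
    (hf : ContinuousOn f {x : Fin n → ℝ | ∀ i, x i ∈ Set.Icc (0 : ℝ) 1})
    (hsymm : ∀ x : Fin n → ℝ, (∀ i, x i ∈ Set.Icc (0 : ℝ) 1) →
      ∀ σ : Equiv.Perm (Fin n), f (x ∘ σ) = f x)
    (ϕ : ℝ → (Fin (n + 1) → ℝ))
    (hϕ : ∀ (t : ℝ) (k : Fin (n + 1)), ϕ t k = t ^ (k : ℕ)) :
    ∃ ρ : (Fin (n + 1) → ℝ) → ℝ, Continuous ρ ∧
      ∀ x : Fin n → ℝ, (∀ i, x i ∈ Set.Icc (0 : ℝ) 1) →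
        f x = ρ (∑ i : Fin n, ϕ (x i)) := by
  obtain rfl : ϕ = fun (t : ℝ) (k : Fin (n + 1)) => t ^ (k : ℕ) := funext₂ hϕ
  set K := {x : Fin n → ℝ | ∀ i, x i ∈ Set.Icc (0 : ℝ) 1}
  set Φ : (Fin n → ℝ) → Fin (n + 1) → ℝ := fun x => ∑ i, fun k => x i ^ (k : ℕ)
  have hK : IsCompact K := by
    simpa [K, Set.pi] using isCompact_univ_pi fun _ : Fin n => isCompact_Icc (a := (0 : ℝ)) (b := 1)
  have hfib : ∀ x ∈ K, ∀ y ∈ K, Φ x = Φ y → f x = f y := by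
    intro x hx y _ hxy
    obtain ⟨σ, rfl⟩ := Equiv.Perm.exists_comp_eq_of_sum_pow_eq (x := x) (y := y) fun k hk => by
      simpa [Φ] using congr_fun hxy ⟨k, by simpa [Nat.lt_succ_iff] using hk⟩
    exact (hsymm x hx σ).symm
  obtain ⟨ρ, hρ⟩ := hK.exists_continuousMap_eqOn_comp (by fun_prop) hf hfib
  exact ⟨ρ, ρ.continuous, hρ⟩

/-- **DeepSets sum-decomposition, scalar case.** Let `n ≥ 1` and let
`f : [0,1]^n → ℝ` be continuous and invariant under every permutation of its arguments.
Then there is a continuous `ρ : ℝ^{n+1} → ℝ` such that, with the continuous map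
`ϕ : [0,1] → ℝ^{n+1}`, `ϕ t = (1, t, t², …, tⁿ)`, we have
`f x = ρ (ϕ x₁ + ⋯ + ϕ xₙ)` for all `x ∈ [0,1]^n`. -/
theorem deepsets_decomposition_scalar
    (n : ℕ) (hn : 1 ≤ n)
    (f : (Fin n → ℝ) → ℝ)
    (hf : ContinuousOn f {x : Fin n → ℝ | ∀ i, x i ∈ Set.Icc (0 : ℝ) 1})
    (hsymm : ∀ x : Fin n → ℝ, (∀ i, x i ∈ Set.Icc (0 : ℝ) 1) →
      ∀ σ : Equiv.Perm (Fin n), f (x ∘ σ) = f x)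
    (ϕ : ℝ → (Fin (n + 1) → ℝ))
    (hϕ : ∀ (t : ℝ) (k : Fin (n + 1)), ϕ t k = t ^ (k : ℕ)) :
    ∃ ρ : (Fin (n + 1) → ℝ) → ℝ, Continuous ρ ∧
      ∀ x : Fin n → ℝ, (∀ i, x i ∈ Set.Icc (0 : ℝ) 1) →
        f x = ρ (∑ i : Fin n, ϕ (x i)) :=
  deepsets_decomposition_scalar_general n f hf hsymm ϕ hϕ
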